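/- arXiv:2510.10767 — 4 statements merged into one kernel-verified Lean document; each statement's English description precedes it below -/
import Mathlib

section
/- Let T > 0, η > 0, β > 0. Set T̄ = 1 + T², β̄ = (1 + β/2)⁻¹, and define the closed-form terminal rewards of the VE model: J_SDE = -1 + T̄^{-(1+η²)} - (1 - β̄)² and J_ODE = -1 + T̄^{-1} - (1 - β̄·(T̄^{-1/2} - 1)/(T̄^{-(1+η²)/2} - 1))². Then the reward gap satisfies |J_ODE - J_SDE| ≤ 1/(2T) + 2/T². -/
open Real

set_option maxHeartbeats 1000000 in
/-- Explicit non-asymptotic reward-gap bound for the VE model (Theorem 3.1). -/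
theorem ve_reward_gap_bound (T η β : ℝ) (hT : 0 < T) (hη : 0 < η) (hβ : 0 < β) :
    let T' : ℝ := 1 + T ^ 2
    let β' : ℝ := (1 + β / 2)⁻¹
    let JSDE : ℝ := -1 + T' ^ (-(1 + η ^ 2)) - (1 - β') ^ 2
    let JODE : ℝ := -1 + T'⁻¹ -
      (1 - β' * (T' ^ (-(1 : ℝ) / 2) - 1) / (T' ^ (-(1 + η ^ 2) / 2) - 1)) ^ 2
    |JODE - JSDE| ≤ 1 / (2 * T) + 2 / T ^ 2 := by
  intro T' β' JSDE JODE
  show |(-1 + T'⁻¹ -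
      (1 - β' * (T' ^ (-(1 : ℝ) / 2) - 1) / (T' ^ (-(1 + η ^ 2) / 2) - 1)) ^ 2) -
      (-1 + T' ^ (-(1 + η ^ 2)) - (1 - β') ^ 2)| ≤ 1 / (2 * T) + 2 / T ^ 2
  have hT'v : T' = 1 + T ^ 2 := rfl
  have hbv : β' = (1 + β / 2)⁻¹ := rfl
  clear JSDE JODE
  clear_value T' β'
  have ht : (1:ℝ) < T' := by rw [hT'v]; nlinarith
  have ht0 : (0:ℝ) < T' := by linarith
  have hb0 : 0 < β' := by rw [hbv]; exact inv_pos.2 (by linarith)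
  have hbid : β' * (1 + β/2) = 1 := by rw [hbv]; field_simp
  have hb1 : β' ≤ 1 := by nlinarith [hbid, hb0]
  set p : ℝ := 1 + η ^ 2 with hp
  have hp1 : 1 < p := by rw [hp]; nlinarith
  set xs : ℝ := T' ^ (-(1:ℝ) / 2) with hxsv
  set xa : ℝ := T' ^ (-p / 2) with hxav
  have hxs0 : 0 < xs := rpow_pos_of_pos ht0 _
  have hxa0 : 0 < xa := rpow_pos_of_pos ht0 _
  have hxs1 : xs < 1 := rpow_lt_one_of_one_lt_of_neg ht (by norm_num)
  have hxa1 : xa < 1 := rpow_lt_one_of_one_lt_of_neg ht (by linarith)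
  have hax : xa < xs := by
    rw [hxsv, hxav]
    exact (rpow_lt_rpow_left_iff ht).2 (by linarith)
  have hxs2 : T'⁻¹ = xs ^ 2 := by
    rw [hxsv, ← Real.rpow_natCast (T' ^ (-(1:ℝ)/2)) 2, ← Real.rpow_mul ht0.le]
    norm_num [Real.rpow_neg_one]
  have hxa2 : T' ^ (-p) = xa ^ 2 := by
    rw [hxav, ← Real.rpow_natCast (T' ^ (-p/2)) 2, ← Real.rpow_mul ht0.le]
    norm_num
  rw [hxs2, hxa2, mul_div_assoc]
  set c0 : ℝ := (xs - 1) / (xa - 1) with hc0v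
  have hne : xa - 1 ≠ 0 := by linarith
  have hid : c0 * (xa - 1) = xs - 1 := div_mul_cancel₀ _ hne
  have h1c : (1 - c0) * (1 - xa) = xs - xa := by linear_combination hid
  have hc0nn : 0 ≤ c0 := by nlinarith [hid]
  have hc1 : c0 ≤ 1 := by nlinarith [h1c]
  have he0 : 0 ≤ 1 - c0 := by linarith
  have hec : 1 - c0 ≤ xs := by
    nlinarith [h1c, mul_pos hxa0 (sub_pos.2 hxs1)]
  -- rewrite the difference
  have hrw : (-1 + xs ^ 2 - (1 - β' * c0) ^ 2) - (-1 + xa ^ 2 - (1 - β') ^ 2)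
      = (xs ^ 2 - xa ^ 2) - ((1 - β' * c0) ^ 2 - (1 - β') ^ 2) := by ring
  rw [hrw]
  have key : (1 - β' * c0) ^ 2 - (1 - β') ^ 2
      = (β' * (1 - c0)) * (2 - β' * (1 + c0)) := by ring
  have hfac2 : 0 ≤ 2 - β' * (1 + c0) := by
    have h := mul_le_mul_of_nonneg_left (by linarith : (1:ℝ) + c0 ≤ 2) hb0.le
    linarith [h]
  have hD0 : 0 ≤ (1 - β' * c0) ^ 2 - (1 - β') ^ 2 := by
    rw [key]; exact mul_nonneg (mul_nonneg hb0.le he0) hfac2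
  have hbe0 : 0 ≤ β' * (1 - c0) := mul_nonneg hb0.le he0
  have hbe : β' * (1 - c0) ≤ xs := (mul_le_of_le_one_left he0 hb1).trans hec
  have h2b : 2 * β' * (1 - β') ≤ 1 / 2 := by nlinarith [sq_nonneg (2 * β' - 1)]
  have hD1 : (1 - β' * c0) ^ 2 - (1 - β') ^ 2 ≤ xs / 2 + xs ^ 2 := by
    rw [key]
    have h1 : (β' * (1 - c0)) ^ 2 ≤ xs ^ 2 := pow_le_pow_left₀ hbe0 hbe 2
    have h2 : 2 * β' * (1 - β') * (1 - c0) ≤ xs / 2 := by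
      linarith [mul_le_mul_of_nonneg_right h2b he0, hec]
    have expand : (β' * (1 - c0)) * (2 - β' * (1 + c0))
        = 2 * β' * (1 - β') * (1 - c0) + (β' * (1 - c0)) ^ 2 := by ring
    rw [expand]
    linarith [h1, h2]
  have hA0 : 0 ≤ xs ^ 2 - xa ^ 2 :=
    sub_nonneg.2 (pow_le_pow_left₀ hxa0.le hax.le 2)
  have hA1 : xs ^ 2 - xa ^ 2 ≤ xs ^ 2 := by linarith [sq_nonneg xa]
  have habs : |(xs ^ 2 - xa ^ 2) - ((1 - β' * c0) ^ 2 - (1 - β') ^ 2)|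
      ≤ xs / 2 + 2 * xs ^ 2 := by
    rw [abs_le]
    constructor <;> linarith [hA0, hA1, hD0, hD1, sq_nonneg xs, hxs0.le]
  refine habs.trans ?_
  have hxsT : xs ^ 2 ≤ (1 / T) ^ 2 := by
    rw [← hxs2, div_pow, one_pow, inv_eq_one_div]
    exact one_div_le_one_div_of_le (by positivity) (by rw [hT'v]; linarith)
  have hsb : xs ≤ 1 / T :=
    (pow_le_pow_iff_left₀ hxs0.le (by positivity) two_ne_zero).1 hxsT
  rw [show (1:ℝ) / (2 * T) = (1 / T) / 2 by ring,
    show (2:ℝ) / T ^ 2 = 2 * (1 / T) ^ 2 by ring]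
  linarith [hsb, hxsT]
end

section
/- Let T > 0, η > 0, β > 0. Set β̄ = (1 + β/2)⁻¹, c₁ = exp(-T²/2), c_η = exp(-(1+η²)T²/2), and define the closed-form terminal rewards of the VP model: J_SDE = -1 - (1 - β̄)² and J_ODE = -1 - (1 - β̄·(c₁ - 1)/(c_η - 1))². Then the reward gap satisfies |J_ODE - J_SDE| ≤ exp(-T²/2)/2 + exp(-T²). -/
/-- Explicit non-asymptotic reward-gap bound for the VP model (Theorem 3.2). -/
theorem vp_reward_gap_bound (T η β : ℝ) (hT : 0 < T) (hη : 0 < η) (hβ : 0 < β) :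
    let β' : ℝ := (1 + β / 2)⁻¹
    let c₁ : ℝ := Real.exp (-T ^ 2 / 2)
    let cη : ℝ := Real.exp (-(1 + η ^ 2) * T ^ 2 / 2)
    let JSDE : ℝ := -1 - (1 - β') ^ 2
    let JODE : ℝ := -1 - (1 - β' * (c₁ - 1) / (cη - 1)) ^ 2
    |JODE - JSDE| ≤ Real.exp (-T ^ 2 / 2) / 2 + Real.exp (-T ^ 2) := by
  intro β' c₁ cη JSDE JODE
  have hc10 : 0 < c₁ := Real.exp_pos _
  have hc11 : c₁ < 1 := by
    rw [show c₁ = Real.exp (-T^2/2) from rfl]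
    apply Real.exp_lt_one_iff.2
    nlinarith [sq_nonneg T, hT]
  have hcη0 : 0 < cη := Real.exp_pos _
  have hcc : cη < c₁ := by
    apply Real.exp_lt_exp.2
    nlinarith [sq_nonneg T, sq_nonneg η, mul_pos (mul_pos hη hη) (mul_pos hT hT)]
  have hd : (0:ℝ) < 1 - cη := by linarith
  set b := β' with hbdef
  have hb0 : 0 < b := by positivity
  have hb1 : b < 1 := by
    rw [hbdef, show β' = (1 + β / 2)⁻¹ from rfl, inv_lt_one_iff₀]
    right; linarith
  set a : ℝ := β' * (c₁ - 1) / (cη - 1) with hadef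
  have hA : a = b * (1 - c₁) / (1 - cη) := by
    rw [hadef, hbdef, div_eq_div_iff (by linarith) (by linarith)]
    ring
  have ha : a * (1 - cη) = b * (1 - c₁) := by
    rw [hA, div_mul_cancel₀ _ hd.ne']
  have ha0 : 0 < a := by
    rw [hA]
    apply div_pos (by nlinarith) hd
  have hab : a ≤ b := by nlinarith [ha, hd]
  have hexp : Real.exp (-T ^ 2) = c₁ ^ 2 := by
    have h := Real.exp_add (-T^2/2) (-T^2/2)
    rw [show (-T^2/2 + -T^2/2) = -T^2 by ring] at h
    rw [h, show c₁ = Real.exp (-T^2/2) from rfl]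
    ring
  have hpos : (0:ℝ) < 2 - c₁ - cη := by linarith
  have key : ((1 - a)^2 - (1 - b)^2) * (2 - c₁ - cη) ≤ c₁ - cη := by
    have e : (c₁ - cη) - ((1 - a)^2 - (1 - b)^2) * (2 - c₁ - cη)
        = (c₁ - cη) * ((1 - cη) - b*(2 - c₁ - cη))^2 / (1 - cη)^2 := by
      rw [hA]
      field_simp
      ring
    have h2 : 0 ≤ (c₁ - cη) - ((1 - a)^2 - (1 - b)^2) * (2 - c₁ - cη) := by
      rw [e]
      apply div_nonneg (mul_nonneg (by linarith) (sq_nonneg _)) (sq_nonneg _)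
    linarith
  have key2 : c₁ - cη ≤ (c₁/2 + c₁^2) * (2 - c₁ - cη) := by
    nlinarith [mul_nonneg hcη0.le (mul_nonneg hc10.le (sub_nonneg.2 hc11.le)),
      mul_nonneg (mul_nonneg hc10.le hc10.le) (sub_nonneg.2 hc11.le),
      mul_nonneg hcη0.le (sub_nonneg.2 hc11.le)]
  have main : (1 - a)^2 - (1 - b)^2 ≤ c₁/2 + c₁^2 := by
    have := key.trans key2
    exact le_of_mul_le_mul_right this hpos
  have habs : |JODE - JSDE| = (1 - a)^2 - (1 - b)^2 := by
    have h3 : JODE - JSDE = (1 - b)^2 - (1 - a)^2 := by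
      rw [show JODE = -1 - (1 - a)^2 from rfl, show JSDE = -1 - (1 - b)^2 from rfl]; ring
    rw [h3, abs_sub_comm, abs_of_nonneg]
    nlinarith [hab, ha0, hb1]
  rw [habs, hexp]
  exact main
end

section
/- Let T > 0, η > 0, β > 0. Set T̄ = 1 + T², β̄ = (1 + β/2)⁻¹, J_ODE = -1 + T̄^{-1} - (1 - β̄·(T̄^{-1/2} - 1)/(T̄^{-(1+η²)/2} - 1))², and J_REF = -2 + T̄^{-(1+η²)}. Then the improvement of fine-tuning satisfies J_ODE - J_REF ≥ 1 - (1 - β̄)² - 1/(2T) - 1/T². -/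
/-!
Write `s = T̄^{-1/2}`, `u = T̄^{-(1+η²)/2}` and `r = (1 - s)/(1 - u)`, so that `0 ≤ u ≤ s < 1`,
`s² = T̄⁻¹`, `u² = T̄^{-(1+η²)}` and `J_ODE - J_REF = 1 + s² - u² - (1 - β̄ r)²`. Since `u ≤ s`
it suffices to bound `(1 - β̄ r)² - (1 - β̄)²` by `(1 - r)/(1 + r)`, uniformly in `β̄`. As
`r ≥ 1 - s` and `(1 - r)/(1 + r)` is antitone, this is at most `s/(2 - s) ≤ s/2 + s²/2`, and
`s ≤ 1/T`.
-/

open Real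

lemma sq_one_sub_mul_sub_sq_le (b : ℝ) {r : ℝ} (hr₀ : -1 < r) (hr₁ : r ≤ 1) :
    (1 - b * r) ^ 2 - (1 - b) ^ 2 ≤ (1 - r) / (1 + r) := by
  -- the left side is `(1 - r) x (2 - x) / (1 + r)` with `x = b (1 + r)`, and `x (2 - x) ≤ 1`
  rw [le_div_iff₀ (by linarith)]
  nlinarith [mul_nonneg (sub_nonneg.2 hr₁) (sq_nonneg (1 - b * (1 + r)))]

lemma one_sub_div_one_add_antitone {a r : ℝ} (ha : -1 < a) (har : a ≤ r) :
    (1 - r) / (1 + r) ≤ (1 - a) / (1 + a) := by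
  rw [div_le_div_iff₀ (by linarith) (by linarith)]
  nlinarith

lemma one_sub_le_div_sub_one {s u : ℝ} (hu₀ : 0 ≤ u) (hu₁ : u < 1) (hs : s ≤ 1) :
    1 - s ≤ (s - 1) / (u - 1) := by
  rw [← neg_div_neg_eq, neg_sub, neg_sub, le_div_iff₀ (by linarith)]
  nlinarith

lemma div_two_sub_le {s : ℝ} (hs₁ : s ≤ 1) : s / (2 - s) ≤ s / 2 + s ^ 2 / 2 := by
  rw [div_le_iff₀ (by linarith)]
  nlinarith [mul_nonneg (sq_nonneg s) (sub_nonneg.2 hs₁)]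

lemma half_add_half_sq_le {s T : ℝ} (hT : 0 < T) (hs : 0 ≤ s) (hsT : s * T ≤ 1) :
    s / 2 + s ^ 2 / 2 ≤ 1 / (2 * T) + 1 / T ^ 2 := by
  have hs_le : s ≤ 1 / T := by rwa [le_div_iff₀ hT]
  have hs_sq_le : s ^ 2 ≤ 1 / T ^ 2 := by
    rw [le_div_iff₀ (by positivity)]
    nlinarith [mul_nonneg hs hT.le]
  have : 1 / (2 * T) = (1 / T) / 2 := by ring
  linarith [div_nonneg zero_le_one (sq_nonneg T)]

lemma sq_one_sub_mul_ratio_sub_sq_le (b : ℝ) {s u T : ℝ} (hT : 0 < T) (hu₀ : 0 ≤ u)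
    (hus : u ≤ s) (hs₁ : s < 1) (hsT : s * T ≤ 1) :
    (1 - b * ((s - 1) / (u - 1))) ^ 2 - (1 - b) ^ 2 ≤ 1 / (2 * T) + 1 / T ^ 2 := by
  have hr₀ := one_sub_le_div_sub_one hu₀ (hus.trans_lt hs₁) hs₁.le
  have hr₁ : (s - 1) / (u - 1) ≤ 1 := (div_le_one_of_neg (by linarith)).2 (by linarith)
  calc _ ≤ (1 - (s - 1) / (u - 1)) / (1 + (s - 1) / (u - 1)) :=
        sq_one_sub_mul_sub_sq_le b (by linarith) hr₁
    _ ≤ (1 - (1 - s)) / (1 + (1 - s)) := one_sub_div_one_add_antitone (by linarith) hr₀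
    _ = s / (2 - s) := by ring_nf
    _ ≤ s / 2 + s ^ 2 / 2 := div_two_sub_le hs₁.le
    _ ≤ 1 / (2 * T) + 1 / T ^ 2 := half_add_half_sq_le hT (hu₀.trans hus) hsT

lemma rpow_div_two_sq {x : ℝ} (hx : 0 ≤ x) (a : ℝ) : (x ^ (a / 2)) ^ 2 = x ^ a := by
  rw [← rpow_natCast, ← rpow_mul hx]
  norm_num

theorem ve_improvement_bound_general (T η β : ℝ) (hT : 0 < T) :
    let T' : ℝ := 1 + T ^ 2
    let β' : ℝ := (1 + β / 2)⁻¹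
    let JODE : ℝ := -1 + T'⁻¹ -
      (1 - β' * (T' ^ (-(1 : ℝ) / 2) - 1) / (T' ^ (-(1 + η ^ 2) / 2) - 1)) ^ 2
    let JREF : ℝ := -2 + T' ^ (-(1 + η ^ 2))
    JODE - JREF ≥ 1 - (1 - β') ^ 2 - 1 / (2 * T) - 1 / T ^ 2 := by
  intro T' β' JODE JREF
  simp only [JODE, JREF, ge_iff_le]
  have hT' : 1 < T' := by simp only [T']; nlinarith
  set s := T' ^ (-(1 : ℝ) / 2)
  set u := T' ^ (-(1 + η ^ 2) / 2)
  have hs_sq : s ^ 2 = T'⁻¹ := by rw [rpow_div_two_sq (by linarith), rpow_neg_one]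
  have hu_sq : u ^ 2 = T' ^ (-(1 + η ^ 2)) := rpow_div_two_sq (by linarith) _
  have hu₀ : 0 ≤ u := by positivity
  have hus : u ≤ s := rpow_le_rpow_of_exponent_le hT'.le (by nlinarith [sq_nonneg η])
  have hs₀ : 0 ≤ s := hu₀.trans hus
  have hs₁ : s < 1 := rpow_lt_one_of_one_lt_of_neg hT' (by norm_num)
  have hsT : s * T ≤ 1 := by
    have : s ^ 2 * T' = 1 := by rw [hs_sq, inv_mul_cancel₀ (by linarith)]
    nlinarith [mul_nonneg hs₀ hT.le]
  have key := sq_one_sub_mul_ratio_sub_sq_le β' hT hu₀ hus hs₁ hsT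
  have hsq : u ^ 2 ≤ s ^ 2 := pow_le_pow_left₀ hu₀ hus 2
  rw [mul_div_assoc, ← hs_sq, ← hu_sq]
  linarith

/-- Explicit non-asymptotic improvement lower bound for the VE model (Theorem 3.1). -/
theorem ve_improvement_bound (T η β : ℝ) (hT : 0 < T) (hη : 0 < η) (hβ : 0 < β) :
    let T' : ℝ := 1 + T ^ 2
    let β' : ℝ := (1 + β / 2)⁻¹
    let JODE : ℝ := -1 + T'⁻¹ -
      (1 - β' * (T' ^ (-(1 : ℝ) / 2) - 1) / (T' ^ (-(1 + η ^ 2) / 2) - 1)) ^ 2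
    let JREF : ℝ := -2 + T' ^ (-(1 + η ^ 2))
    JODE - JREF ≥ 1 - (1 - β') ^ 2 - 1 / (2 * T) - 1 / T ^ 2 :=
  ve_improvement_bound_general T η β hT
end

section
/- Let T > 0, η > 0, β > 0. Set β̄ = (1 + β/2)⁻¹, c₁ = exp(-T²/2), c_η = exp(-(1+η²)T²/2), J_ODE = -1 - (1 - β̄·(c₁ - 1)/(c_η - 1))², and J_REF = -2. Then the improvement of fine-tuning satisfies J_ODE - J_REF ≥ 1 - (1 - β̄)² - exp(-T²/2)/2 - exp(-T²). -/
/-!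
With `ρ = (1 - c₁) / (1 - c_η)`, the optimal ODE sampler loses `(1 - β̄ ρ)²` against the ideal
`1`, while the shortfall `δ = 1 - ρ = (c₁ - c_η) / (1 - c_η)` lies in `[0, c₁]`. Expanding
`(1 - β̄ + β̄ δ)²` and using `β̄ (1 - β̄) ≤ 1/4`, `β̄ ≤ 1` bounds the loss by
`(1 - β̄)² + c₁ / 2 + c₁²`, and `c₁² = exp (-T²)`.
-/

lemma sq_one_sub_mul_one_sub_le {b d c : ℝ} (hb0 : 0 ≤ b) (hb1 : b ≤ 1) (hd0 : 0 ≤ d)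
    (hdc : d ≤ c) :
    (1 - b * (1 - d)) ^ 2 ≤ (1 - b) ^ 2 + c / 2 + c ^ 2 := by
  have hcross : 2 * (b * (1 - b)) * d ≤ c / 2 := by
    nlinarith [sq_nonneg (2 * b - 1)]
  have hsq : b ^ 2 * d ^ 2 ≤ c ^ 2 := by
    have hb2 : b ^ 2 ≤ 1 := pow_le_one₀ hb0 hb1
    nlinarith [pow_le_pow_left₀ hd0 hdc 2, sq_nonneg d]
  calc (1 - b * (1 - d)) ^ 2 = (1 - b) ^ 2 + 2 * (b * (1 - b)) * d + b ^ 2 * d ^ 2 := by ring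
    _ ≤ (1 - b) ^ 2 + c / 2 + c ^ 2 := by linarith

lemma one_sub_div_sub_one_mem_Icc {x y : ℝ} (hy0 : 0 ≤ y) (hyx : y ≤ x) (hx1 : x < 1) :
    1 - (x - 1) / (y - 1) ∈ Set.Icc 0 x := by
  have hy1 : 0 < 1 - y := by linarith
  have hδ : 1 - (x - 1) / (y - 1) = (x - y) / (1 - y) := by
    field_simp [(by linarith : y - 1 ≠ 0)]
    ring
  rw [hδ, Set.mem_Icc, div_le_iff₀ hy1]
  exact ⟨div_nonneg (by linarith) hy1.le, by nlinarith⟩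

lemma inv_one_add_half_mem_Icc {β : ℝ} (hβ : 0 ≤ β) : (1 + β / 2)⁻¹ ∈ Set.Icc 0 1 :=
  ⟨by positivity, inv_le_one_of_one_le₀ (by linarith)⟩

theorem vp_improvement_bound_general (T η β : ℝ) (hT : 0 < T) (hβ : 0 < β) :
    let β' : ℝ := (1 + β / 2)⁻¹
    let c₁ : ℝ := Real.exp (-T ^ 2 / 2)
    let cη : ℝ := Real.exp (-(1 + η ^ 2) * T ^ 2 / 2)
    let JODE : ℝ := -1 - (1 - β' * (c₁ - 1) / (cη - 1)) ^ 2
    let JREF : ℝ := -2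
    JODE - JREF ≥ 1 - (1 - β') ^ 2 - Real.exp (-T ^ 2 / 2) / 2 - Real.exp (-T ^ 2) := by
  intro β' c₁ cη JODE JREF
  obtain ⟨hβ'0, hβ'1⟩ := inv_one_add_half_mem_Icc hβ.le
  have hc₁ : c₁ < 1 := Real.exp_lt_one_iff.mpr (by nlinarith)
  have hcη : cη ≤ c₁ := Real.exp_le_exp.mpr (by nlinarith [mul_nonneg (sq_nonneg η) (sq_nonneg T)])
  obtain ⟨hδ0, hδc₁⟩ := one_sub_div_sub_one_mem_Icc (Real.exp_pos _).le hcη hc₁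
  have hloss := sq_one_sub_mul_one_sub_le hβ'0 hβ'1 hδ0 hδc₁
  have hexp : Real.exp (-T ^ 2) = c₁ ^ 2 := by
    rw [← Real.exp_nat_mul]
    ring_nf
  rw [sub_sub_cancel, ← mul_div_assoc] at hloss
  simp only [JODE, JREF, ge_iff_le, hexp]
  linarith

/-- Explicit non-asymptotic improvement lower bound for the VP model (Theorem 3.2). -/
theorem vp_improvement_bound (T η β : ℝ) (hT : 0 < T) (hη : 0 < η) (hβ : 0 < β) :
    let β' : ℝ := (1 + β / 2)⁻¹
    let c₁ : ℝ := Real.exp (-T ^ 2 / 2)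
    let cη : ℝ := Real.exp (-(1 + η ^ 2) * T ^ 2 / 2)
    let JODE : ℝ := -1 - (1 - β' * (c₁ - 1) / (cη - 1)) ^ 2
    let JREF : ℝ := -2
    JODE - JREF ≥ 1 - (1 - β') ^ 2 - Real.exp (-T ^ 2 / 2) / 2 - Real.exp (-T ^ 2) :=
  vp_improvement_bound_general T η β hT hβ
end
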